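/- Let a_X, y_X1, y_Y1, X, Y, t be real numbers with t > 0, and suppose for all real l: -(a_X+l)^3 * y_X1 + 3*(a_X+l)^2 * X - l^3 * y_Y1 + 3*l^2 * Y = t. Then y_Y1 = -y_X1, a_X * y_X1 = X + Y, a_X * (X - Y) = 0, and t = a_X^2 * (-a_X * y_X1 + 3*X). -/
import Mathlib


theorem stmt_2 (aX yX1 yY1 X Y t : ℝ) (ht : 0 < t)
    (h : ∀ l : ℝ,
      -(aX + l) ^ 3 * yX1 + 3 * (aX + l) ^ 2 * X - l ^ 3 * yY1 + 3 * l ^ 2 * Y = t) :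
    yY1 = -yX1 ∧ aX * yX1 = X + Y ∧ aX * (X - Y) = 0 ∧
      t = aX ^ 2 * (-aX * yX1 + 3 * X) := by
  have e0 := h 0
  have e1 := h 1
  have em := h (-1)
  have e2 := h 2
  refine ⟨?_, ?_, ?_, ?_⟩
  · linear_combination -(e2 - 3*e1 + 3*e0 - em) / 6
  · linear_combination -(e1 - 2*e0 + em) / 6
  · linear_combination (e1 - em) / 6 - (e2 - 3*e1 + 3*e0 - em) / 18 - aX * (e1 - 2*e0 + em) / 6
  · linear_combination -e0
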